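/- Let G be a path graph with n vertices and let A ⊆ V(G) have k connected components. Then A is reconfigurable under the component sliding rule CS to the left-most subset L with h_L = h_A, namely the unique subset whose connected components have the same left-to-right size sequence as A and are packed as far left as possible (the components occupy positions 1 through |A| + k − 1 with exactly one empty vertex between consecutive components). -/

import Mathlib

open scoped Classical

noncomputable section

/-- `U` induces a connected subgraph of `G`. -/
def IsConnSub {V : Type*} (G : SimpleGraph V) (U : Finset V) : Prop :=
  (G.induce (U : Set V)).Connected

/-- The set of connected components of a vertex subset `U`:
maximal subsets of `U` inducing connected subgraphs. -/
def comps {V : Type*} [Fintype V] [DecidableEq V] (G : SimpleGraph V) (U : Finset V) :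
    Finset (Finset V) :=
  Finset.univ.filter (fun C => C ⊆ U ∧ IsConnSub G C ∧
    ∀ D : Finset V, C ⊆ D → D ⊆ U → IsConnSub G D → D = C)

/-- The CC-multiset of `U`: the multiset of sizes of connected components of `U`. -/
def ccMultiset {V : Type*} [Fintype V] [DecidableEq V] (G : SimpleGraph V) (U : Finset V) :
    Multiset ℕ :=
  (comps G U).val.map Finset.card

/-- Adjacency under component jumping (CJ). -/
def adjCJ {V : Type*} [Fintype V] [DecidableEq V] (G : SimpleGraph V) (U U' : Finset V) : Prop :=
  ccMultiset G U = ccMultiset G U' ∧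
  (comps G U \ comps G U').card = 1 ∧ (comps G U' \ comps G U).card = 1

/-- Adjacency under component sliding (CS). -/
def adjCS {V : Type*} [Fintype V] [DecidableEq V] (G : SimpleGraph V) (U U' : Finset V) : Prop :=
  adjCJ G U U' ∧
  ∀ C ∈ comps G U \ comps G U', ∀ C' ∈ comps G U' \ comps G U, IsConnSub G (C ∪ C')

/-- Adjacency under CS1 (component sliding by one vertex). -/
def adjCS1 {V : Type*} [Fintype V] [DecidableEq V] (G : SimpleGraph V) (U U' : Finset V) : Prop :=
  adjCS G U U' ∧
  ∀ C ∈ comps G U \ comps G U', ∀ C' ∈ comps G U' \ comps G U,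
    (C \ C').card = 1 ∧ (C' \ C).card = 1

/-- Adjacency under token jumping (TJ). -/
def adjTJ {V : Type*} [DecidableEq V] (G : SimpleGraph V) (U U' : Finset V) : Prop :=
  (U \ U').card = 1 ∧ (U' \ U).card = 1

/-- `A` and `B` are reconfigurable under rule `R` keeping the CC-multiset equal to `M`. -/
def Reconf {V : Type*} [Fintype V] [DecidableEq V] (G : SimpleGraph V) (M : Multiset ℕ)
    (R : Finset V → Finset V → Prop) (A B : Finset V) : Prop :=
  ∃ (ℓ : ℕ) (W : ℕ → Finset V), W 0 = A ∧ W ℓ = B ∧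
    (∀ i ≤ ℓ, ccMultiset G (W i) = M) ∧ ∀ i < ℓ, R (W i) (W (i + 1))

end

/-- `h_U`: the sequence of sizes of connected components of `U` along the path,
listed in left-to-right order (ordering components by their minimum vertex). -/
noncomputable def hseq (n : ℕ) (U : Finset (Fin n)) : List ℕ :=
  (((comps (SimpleGraph.pathGraph n) U).image (fun C => C.min)).sort (· ≤ ·)).map
    (fun m => ((comps (SimpleGraph.pathGraph n) U).filter (fun C => C.min = m)).sup Finset.card)

/-- The left-most subset of the path realizing the size sequence `h`: the `j`-th
component occupies the `h[j]` consecutive positions starting at `(h.take j).sum + j`,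
so that components are packed as far left as possible with exactly one empty vertex
between consecutive components. -/
def leftmost (n : ℕ) (h : List ℕ) : Finset (Fin n) :=
  Finset.univ.filter (fun v =>
    ∃ j < h.length, (h.take j).sum + j ≤ v.val ∧ v.val < (h.take j).sum + j + h.getD j 0)

/-!
A vertex set of the path is a sequence of blocks (intervals) of sizes `h`, starting at positions
`s 0 < s 1 < ⋯` with at least one free vertex between consecutive blocks; its components are
exactly these blocks, so `h = h_A` and the CC-multiset is `h`. As long as some block is not at
its packed position, take the left-most such block: it lies strictly right of its packed position
while its left neighbour is packed, so the gap in front of it has at least two free vertices and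
sliding it one step to the left is a single CS move. Each move decreases `∑ s j`.
-/

open SimpleGraph Finset

namespace PathSliding

variable {n : ℕ}

lemma image_sdiff_image {ι α : Type*} [DecidableEq α] {S : Finset ι} {f g : ι → α} {j : ι}
    (hj : j ∈ S) (hfg : ∀ i ∈ S, i ≠ j → f i = g i) (hf : Set.InjOn f S)
    (hne : g j ≠ f j) :
    S.image f \ S.image g = {f j} := by
  ext x
  simp only [mem_sdiff, mem_image, mem_singleton, not_exists, not_and]
  constructor
  · rintro ⟨⟨i, hi, rfl⟩, hnot⟩
    by_contra hij
    exact hnot i hi (hfg i hi fun h => hij (h ▸ rfl)).symm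
  · rintro rfl
    refine ⟨⟨j, hj, rfl⟩, fun i hi hgi => ?_⟩
    by_cases hij : i = j
    · exact hne (hij ▸ hgi)
    · exact hij (hf hi hj ((hfg i hi hij).trans hgi))

lemma sum_update_pred_lt {ι : Type*} [DecidableEq ι] {S : Finset ι} {f : ι → ℕ} {j : ι}
    (hj : j ∈ S) (hpos : 0 < f j) :
    ∑ i ∈ S, Function.update f j (f j - 1) i < ∑ i ∈ S, f i := by
  rw [sum_update_of_mem hj, ← add_sum_erase S f hj, sdiff_singleton_eq_erase]
  omega

section Reconf

variable {V : Type*} [Fintype V] [DecidableEq V] {G : SimpleGraph V} {M : Multiset ℕ}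
  {R : Finset V → Finset V → Prop} {A B C : Finset V}

lemma reconf_refl (hA : ccMultiset G A = M) : Reconf G M R A A :=
  ⟨0, fun _ => A, rfl, rfl, fun _ _ => hA, fun _ hi => absurd hi (Nat.not_lt_zero _)⟩

lemma reconf_cons (hAB : R A B) (hA : ccMultiset G A = M) (hBC : Reconf G M R B C) :
    Reconf G M R A C := by
  obtain ⟨ℓ, W, hW0, hWℓ, hWM, hWR⟩ := hBC
  refine ⟨ℓ + 1, fun i => Nat.casesOn i A W, rfl, hWℓ, fun i hi => ?_, fun i hi => ?_⟩
  · cases i with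
    | zero => exact hA
    | succ i => exact hWM i (by omega)
  · cases i with
    | zero => show R A (W 0); rwa [hW0]
    | succ i => exact hWR i (by omega)

end Reconf

lemma map_range_getD {α : Type*} (l : List α) (d : α) :
    (List.range l.length).map (l.getD · d) = l :=
  List.ext_getElem (by simp) fun i _ hi => by simp [List.getElem?_eq_getElem hi]

lemma getD_concat_length {α : Type*} (l : List α) (x d : α) :
    (l ++ [x]).getD l.length d = x := by
  simp

lemma getD_set {α : Type*} {l : List α} {x d : α} {i j : ℕ} (hi : i < l.length) :
    (l.set i x).getD j d = if i = j then x else l.getD j d := by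
  split_ifs with hij
  · subst hij; simp [hi]
  · simp [List.getElem?_set_ne hij]

lemma walk_end_lt_of_notMem {U : Set (Fin n)} {w : Fin n} (hw : w ∉ U) {x y : U}
    (p : ((pathGraph n).induce U).Walk x y) (hx : (x : Fin n) < w) : (y : Fin n) < w := by
  induction p with
  | nil => exact hx
  | @cons u v _ hadj _ ih =>
    refine ih ?_
    have hvw : (v : Fin n) ≠ w := fun h => hw (h ▸ v.2)
    rw [Fin.lt_def] at hx ⊢
    rw [Ne, Fin.ext_iff] at hvw
    have hadj : (pathGraph n).Adj u v := hadj
    rcases pathGraph_adj.1 hadj with h | h <;> omega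

lemma isConnSub_pathGraph_iff {U : Finset (Fin n)} :
    IsConnSub (pathGraph n) U ↔ U.Nonempty ∧ (U : Set (Fin n)).OrdConnected := by
  constructor
  · intro hU
    obtain ⟨⟨x, hx⟩⟩ := hU.nonempty
    refine ⟨⟨x, hx⟩, ⟨fun y hy z hz w ⟨hyw, hwz⟩ => ?_⟩⟩
    by_contra hw
    obtain ⟨p⟩ := hU.preconnected ⟨y, hy⟩ ⟨z, hz⟩
    have hyw' : y < w := lt_of_le_of_ne hyw (by rintro rfl; exact hw hy)
    exact (walk_end_lt_of_notMem hw p hyw').not_ge hwz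
  · rintro ⟨⟨x₀, hx₀⟩, hU⟩
    have : Nonempty (U : Set (Fin n)) := ⟨⟨x₀, hx₀⟩⟩
    have reach : ∀ (d : ℕ) (x y : Fin n) (hx : x ∈ U) (hy : y ∈ U), y.val = x.val + d →
        ((pathGraph n).induce (U : Set (Fin n))).Reachable ⟨x, hx⟩ ⟨y, hy⟩ := by
      intro d
      induction d with
      | zero =>
        intro x y hx hy hxy
        obtain rfl : x = y := Fin.ext hxy.symm
        rfl
      | succ d ih =>
        intro x y hx hy hxy
        let y' : Fin n := ⟨y.val - 1, by omega⟩
        have hy' : y' ∈ U := hU.out hx hy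
          ⟨Fin.le_def.2 (by simp [y']; omega), Fin.le_def.2 (by simp [y'])⟩
        refine (ih x y' hx hy' (by simp [y']; omega)).trans (Adj.reachable ?_)
        exact pathGraph_adj.2 (Or.inl (by simp [y']; omega))
    refine ⟨fun ⟨x, hx⟩ ⟨y, hy⟩ => ?_⟩
    rcases le_total x y with h | h
    · exact reach (y.val - x.val) x y hx hy (by rw [Fin.le_def] at h; omega)
    · exact (reach (x.val - y.val) y x hy hx (by rw [Fin.le_def] at h; omega)).symm

def block (n a m : ℕ) : Finset (Fin n) :=
  univ.filter fun v => a ≤ v.val ∧ v.val < a + m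

@[simp] lemma mem_block {a m : ℕ} {v : Fin n} :
    v ∈ block n a m ↔ a ≤ v.val ∧ v.val < a + m := by
  simp [block]

lemma ordConnected_block (a m : ℕ) : (block n a m : Set (Fin n)).OrdConnected :=
  ⟨fun x hx y hy z ⟨hxz, hzy⟩ => by simp only [mem_coe, mem_block, Fin.le_def] at *; omega⟩

lemma isConnSub_block {a m : ℕ} (hm : 0 < m) (ham : a + m ≤ n) :
    IsConnSub (pathGraph n) (block n a m) :=
  isConnSub_pathGraph_iff.2 ⟨⟨⟨a, by omega⟩, by simpa using hm⟩, ordConnected_block a m⟩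

lemma card_block {a m : ℕ} (ham : a + m ≤ n) : (block n a m).card = m := by
  have himage : (block n a m).image Fin.val = Ico a (a + m) := by
    ext x
    simp only [mem_image, mem_block, mem_Ico]
    exact ⟨fun ⟨v, hv, hvx⟩ => hvx ▸ hv, fun hx => ⟨⟨x, by omega⟩, hx, rfl⟩⟩
  rw [← card_image_of_injective _ Fin.val_injective, himage, Nat.card_Ico,
    Nat.add_sub_cancel_left]

lemma min_block {a m : ℕ} (hm : 0 < m) (ham : a + m ≤ n) :
    (block n a m).min = ((⟨a, by omega⟩ : Fin n) : WithTop (Fin n)) :=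
  le_antisymm (Finset.min_le (by simpa using hm)) <|
    Finset.le_min fun v hv => WithTop.coe_le_coe.2 (Fin.le_def.2 (mem_block.1 hv).1)

lemma start_eq_of_block_eq {a m a' m' : ℕ} (hm : 0 < m) (ham : a + m ≤ n) (hm' : 0 < m')
    (ham' : a' + m' ≤ n) (heq : block n a m = block n a' m') : a = a' := by
  have hmin := min_block hm ham
  rw [heq, min_block hm' ham', WithTop.coe_inj, Fin.mk.injEq] at hmin
  exact hmin.symm

def blocks (n : ℕ) (h : List ℕ) (s : ℕ → ℕ) : Finset (Fin n) :=
  univ.filter fun v => ∃ j < h.length, s j ≤ v.val ∧ v.val < s j + h.getD j 0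

lemma mem_blocks {h : List ℕ} {s : ℕ → ℕ} {v : Fin n} :
    v ∈ blocks n h s ↔ ∃ j < h.length, v ∈ block n (s j) (h.getD j 0) := by
  simp [blocks]

lemma blocks_snoc {h : List ℕ} {s : ℕ → ℕ} {a : ℕ} (ha : a < n) :
    blocks n (h ++ [1]) (Function.update s h.length a) = insert ⟨a, ha⟩ (blocks n h s) := by
  ext v
  simp only [mem_insert, mem_blocks, mem_block, List.length_append, List.length_singleton,
    Fin.ext_iff]
  constructor
  · rintro ⟨j, hj, hvj⟩
    rcases Nat.lt_succ_iff_lt_or_eq.1 hj with hj | rfl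
    · rw [List.getD_append _ _ _ _ hj, Function.update_of_ne hj.ne] at hvj
      exact Or.inr ⟨j, hj, hvj⟩
    · rw [getD_concat_length, Function.update_self] at hvj
      left; omega
  · rintro (hv | ⟨j, hj, hvj⟩)
    · refine ⟨h.length, Nat.lt_succ_self _, ?_⟩
      rw [getD_concat_length, Function.update_self]; omega
    · refine ⟨j, by omega, ?_⟩
      rwa [List.getD_append _ _ _ _ hj, Function.update_of_ne hj.ne]

structure Spaced (n : ℕ) (h : List ℕ) (s : ℕ → ℕ) : Prop where
  size_pos : ∀ j < h.length, 0 < h.getD j 0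
  end_le : ∀ j < h.length, s j + h.getD j 0 ≤ n
  end_lt_start : ∀ j, j + 1 < h.length → s j + h.getD j 0 < s (j + 1)

namespace Spaced

variable {h : List ℕ} {s : ℕ → ℕ} {i j a : ℕ}

lemma end_lt_start_of_lt (hs : Spaced n h s) (hij : i < j) (hj : j < h.length) :
    s i + h.getD i 0 < s j := by
  induction j with
  | zero => omega
  | succ j ih =>
    rcases Nat.lt_succ_iff_lt_or_eq.1 hij with hij | rfl
    · have := ih hij (by omega)
      have := hs.end_lt_start j hj
      omega
    · exact hs.end_lt_start i hj

lemma start_lt_start (hs : Spaced n h s) (hij : i < j) (hj : j < h.length) : s i < s j :=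
  lt_of_le_of_lt (Nat.le_add_right _ _) (hs.end_lt_start_of_lt hij hj)

lemma ne_boundary_of_mem (hs : Spaced n h s) (hj : j < h.length) {u : Fin n}
    (hu : u ∈ blocks n h s) : u.val + 1 ≠ s j ∧ u.val ≠ s j + h.getD j 0 := by
  obtain ⟨i, hi, hui⟩ := mem_blocks.1 hu
  rw [mem_block] at hui
  rcases lt_trichotomy i j with hij | rfl | hij
  · have := hs.end_lt_start_of_lt hij hj
    omega
  · omega
  · have := hs.end_lt_start_of_lt hij hi
    have := hs.size_pos j hj
    omega

lemma subset_block (hs : Spaced n h s) (hj : j < h.length) {D : Finset (Fin n)}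
    (hD : D ⊆ blocks n h s) (hDc : (D : Set (Fin n)).OrdConnected) {d : Fin n} (hd : d ∈ D)
    (hdj : d ∈ block n (s j) (h.getD j 0)) : D ⊆ block n (s j) (h.getD j 0) := by
  intro x hx
  rw [mem_block] at hdj ⊢
  by_contra hxj
  rcases Nat.lt_or_ge x.val (s j) with hlt | hge
  · let w : Fin n := ⟨s j - 1, by omega⟩
    have hw : w ∈ D := hDc.out hx hd (by simp only [Set.mem_Icc, Fin.le_def, w]; omega)
    exact (hs.ne_boundary_of_mem hj (hD hw)).1 (by dsimp only [w]; omega)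
  · let w : Fin n := ⟨s j + h.getD j 0, by omega⟩
    have hw : w ∈ D := hDc.out hd hx (by simp only [Set.mem_Icc, Fin.le_def, w]; omega)
    exact (hs.ne_boundary_of_mem hj (hD hw)).2 rfl

lemma mem_comps_iff (hs : Spaced n h s) {C : Finset (Fin n)} :
    C ∈ comps (pathGraph n) (blocks n h s) ↔
      ∃ j < h.length, block n (s j) (h.getD j 0) = C := by
  simp only [comps, mem_filter, mem_univ, true_and]
  constructor
  · rintro ⟨hCU, hCconn, hCmax⟩
    obtain ⟨⟨c, hc⟩, hCord⟩ := isConnSub_pathGraph_iff.1 hCconn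
    obtain ⟨j, hj, hcj⟩ := mem_blocks.1 (hCU hc)
    refine ⟨j, hj, hCmax _ (hs.subset_block hj hCU hCord hc hcj) ?_ ?_⟩
    · exact fun v hv => mem_blocks.2 ⟨j, hj, hv⟩
    · exact isConnSub_block (hs.size_pos j hj) (hs.end_le j hj)
  · rintro ⟨j, hj, rfl⟩
    have hpos := hs.size_pos j hj
    have hle := hs.end_le j hj
    refine ⟨fun v hv => mem_blocks.2 ⟨j, hj, hv⟩, isConnSub_block hpos hle, ?_⟩
    intro D hjD hD hDconn
    have hstart : (⟨s j, by omega⟩ : Fin n) ∈ block n (s j) (h.getD j 0) := by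
      simpa using hpos
    exact Subset.antisymm (hs.subset_block hj hD (isConnSub_pathGraph_iff.1 hDconn).2
      (hjD hstart) hstart) hjD

lemma comps_eq (hs : Spaced n h s) :
    comps (pathGraph n) (blocks n h s) =
      (range h.length).image fun j => block n (s j) (h.getD j 0) := by
  ext C
  simp [hs.mem_comps_iff]

lemma injOn_block (hs : Spaced n h s) :
    Set.InjOn (fun j => block n (s j) (h.getD j 0)) (range h.length) := by
  intro i hi j hj heq
  rw [coe_range, Set.mem_Iio] at hi hj
  have hsij := start_eq_of_block_eq (hs.size_pos i hi) (hs.end_le i hi) (hs.size_pos j hj)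
    (hs.end_le j hj) heq
  rcases lt_trichotomy i j with hlt | rfl | hlt
  · exact absurd hsij (hs.start_lt_start hlt hj).ne
  · rfl
  · exact absurd hsij (hs.start_lt_start hlt hi).ne'

lemma ccMultiset_eq (hs : Spaced n h s) :
    ccMultiset (pathGraph n) (blocks n h s) = h := by
  rw [ccMultiset, hs.comps_eq, image_val_of_injOn hs.injOn_block, Multiset.map_map, range_val,
    Multiset.range, Multiset.map_coe]
  conv_rhs => rw [← map_range_getD h 0]
  congr 1
  refine List.map_congr_left fun j hj => ?_
  exact card_block (hs.end_le j (List.mem_range.1 hj))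

lemma min_block_lt_min_block (hs : Spaced n h s) (hij : i < j) (hj : j < h.length) :
    (block n (s i) (h.getD i 0)).min < (block n (s j) (h.getD j 0)).min := by
  rw [min_block (hs.size_pos i (by omega)) (hs.end_le i (by omega)),
    min_block (hs.size_pos j hj) (hs.end_le j hj), WithTop.coe_lt_coe, Fin.mk_lt_mk]
  exact hs.start_lt_start hij hj

lemma hseq_eq (hs : Spaced n h s) : hseq n (blocks n h s) = h := by
  set B : ℕ → Finset (Fin n) := fun j => block n (s j) (h.getD j 0)
  have hsorted : ((List.range h.length).map fun j => (B j).min).Pairwise (· < ·) :=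
    List.pairwise_map.2 (List.pairwise_lt_range.imp_of_mem fun hi hj hij =>
      hs.min_block_lt_min_block hij (List.mem_range.1 hj))
  have hsort : ((comps (pathGraph n) (blocks n h s)).image fun C => C.min).sort (· ≤ ·) =
      (List.range h.length).map fun j => (B j).min := by
    rw [hs.comps_eq, image_image]
    convert (List.toFinset_sort _ (hsorted.imp ne_of_lt)).2 (hsorted.imp le_of_lt) using 2
    ext; simp [B]
  rw [hseq, hsort, List.map_map]
  conv_rhs => rw [← map_range_getD h 0]
  refine List.map_congr_left fun i hi => ?_
  rw [List.mem_range] at hi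
  have hfilter : (comps (pathGraph n) (blocks n h s)).filter (fun C => C.min = (B i).min) =
      {B i} := by
    ext C
    simp only [mem_filter, mem_singleton, hs.mem_comps_iff]
    constructor
    · rintro ⟨⟨j, hj, rfl⟩, hji⟩
      rcases lt_trichotomy j i with hlt | rfl | hlt
      · exact absurd hji (hs.min_block_lt_min_block hlt hi).ne
      · rfl
      · exact absurd hji (hs.min_block_lt_min_block hlt hj).ne'
    · rintro rfl
      exact ⟨⟨i, hi, rfl⟩, rfl⟩
  simp only [Function.comp, hfilter, sup_singleton]
  exact card_block (hs.end_le i hi)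

lemma snoc (hs : Spaced n h s) (ha : a < n)
    (hlast : ∀ j, j + 1 = h.length → s j + h.getD j 0 < a) :
    Spaced n (h ++ [1]) (Function.update s h.length a) := by
  have hupd : ∀ j < h.length, Function.update s h.length a j = s j :=
    fun j hj => Function.update_of_ne hj.ne _ _
  refine ⟨fun j hj => ?_, fun j hj => ?_, fun j hj => ?_⟩ <;>
    simp only [List.length_append, List.length_singleton] at hj
  · rcases Nat.lt_succ_iff_lt_or_eq.1 hj with hj | rfl
    · rw [List.getD_append _ _ _ _ hj]; exact hs.size_pos j hj
    · rw [getD_concat_length]; exact Nat.one_pos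
  · rcases Nat.lt_succ_iff_lt_or_eq.1 hj with hj | rfl
    · rw [List.getD_append _ _ _ _ hj, hupd j hj]; exact hs.end_le j hj
    · rw [getD_concat_length, Function.update_self]; omega
  · rw [List.getD_append _ _ _ _ (by omega), hupd j (by omega)]
    rcases Nat.lt_succ_iff_lt_or_eq.1 hj with hj | hj
    · rw [hupd _ hj]; exact hs.end_lt_start j hj
    · rw [hj, Function.update_self]; exact hlast j hj

lemma extend_last (hs : Spaced n h s) {L : ℕ} (hL : L + 1 = h.length) (ha : a < n)
    (hend : s L + h.getD L 0 = a) : Spaced n (h.set L (h.getD L 0 + 1)) s := by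
  refine ⟨fun j hj => ?_, fun j hj => ?_, fun j hj => ?_⟩ <;>
    rw [List.length_set] at hj <;> rw [getD_set (by omega)]
  · split_ifs
    · omega
    · exact hs.size_pos j hj
  · split_ifs with hLj
    · subst hLj; omega
    · exact hs.end_le j hj
  · rw [if_neg (by omega)]
    exact hs.end_lt_start j hj

lemma blocks_extend_last (hs : Spaced n h s) {L : ℕ} (hL : L + 1 = h.length) (ha : a < n)
    (hend : s L + h.getD L 0 = a) :
    blocks n (h.set L (h.getD L 0 + 1)) s = insert ⟨a, ha⟩ (blocks n h s) := by
  have hLpos := hs.size_pos L (by omega)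
  ext v
  simp only [mem_insert, mem_blocks, mem_block, List.length_set, Fin.ext_iff]
  constructor
  · rintro ⟨j, hj, hvj⟩
    rw [getD_set (by omega)] at hvj
    split_ifs at hvj with hLj
    · subst hLj
      by_cases hva : v.val = a
      · exact Or.inl hva
      · exact Or.inr ⟨L, hj, by omega⟩
    · exact Or.inr ⟨j, hj, hvj⟩
  · rintro (hv | ⟨j, hj, hvj⟩)
    · exact ⟨L, by omega, by rw [getD_set (by omega), if_pos rfl]; omega⟩
    · refine ⟨j, hj, ?_⟩
      rw [getD_set (by omega)]
      split_ifs with hLj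
      · subst hLj; omega
      · exact hvj

end Spaced

theorem exists_spaced_blocks_eq (U : Finset (Fin n)) :
    ∃ h s, Spaced n h s ∧ blocks n h s = U := by
  induction U using Finset.induction_on_max with
  | empty => exact ⟨[], id, ⟨by simp, by simp, by simp⟩, by ext; simp [mem_blocks]⟩
  | insert a U hlt ih =>
    obtain ⟨h, s, hs, rfl⟩ := ih
    -- the new maximum `a` either extends the last block or starts a new one
    by_cases hext : ∃ L, L + 1 = h.length ∧ s L + h.getD L 0 = a.val
    · obtain ⟨L, hL, hend⟩ := hext
      exact ⟨_, s, hs.extend_last hL a.isLt hend, hs.blocks_extend_last hL a.isLt hend⟩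
    · refine ⟨h ++ [1], Function.update s h.length a, hs.snoc a.isLt fun j hj => ?_,
        blocks_snoc a.isLt⟩
      have hpos := hs.size_pos j (by omega)
      have hle := hs.end_le j (by omega)
      have hmem : (⟨s j + h.getD j 0 - 1, by omega⟩ : Fin n) ∈ blocks n h s :=
        mem_blocks.2 ⟨j, by omega, by simp only [mem_block]; omega⟩
      have hbelow := Fin.lt_def.1 (hlt _ hmem)
      have hne : s j + h.getD j 0 ≠ a.val := fun heq => hext ⟨j, hj, heq⟩
      simp only at hbelow
      omega

def packedStart (h : List ℕ) (j : ℕ) : ℕ := (h.take j).sum + j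

lemma leftmost_eq_blocks (h : List ℕ) : leftmost n h = blocks n h (packedStart h) := rfl

lemma packedStart_succ {h : List ℕ} {j : ℕ} (hj : j < h.length) :
    packedStart h (j + 1) = packedStart h j + h.getD j 0 + 1 := by
  rw [packedStart, packedStart, List.sum_take_succ _ _ hj, List.getD_eq_getElem _ _ hj]
  omega

lemma blocks_congr {h : List ℕ} {s t : ℕ → ℕ} (hst : ∀ j < h.length, s j = t j) :
    blocks n h s = blocks n h t := by
  ext v
  simp only [mem_blocks]
  exact exists_congr fun j => and_congr_right fun hj => by rw [hst j hj]

namespace Spaced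

variable {h : List ℕ} {s : ℕ → ℕ} {j : ℕ}

lemma packedStart_le (hs : Spaced n h s) (hj : j < h.length) : packedStart h j ≤ s j := by
  induction j with
  | zero => simp [packedStart]
  | succ j ih =>
    rw [packedStart_succ (by omega)]
    have := ih (by omega)
    have := hs.end_lt_start j hj
    omega

lemma packed (hs : Spaced n h s) : Spaced n h (packedStart h) where
  size_pos := hs.size_pos
  end_le j hj := (Nat.add_le_add_right (hs.packedStart_le hj) _).trans (hs.end_le j hj)
  end_lt_start j hj := by rw [packedStart_succ (by omega)]; omega

lemma slide (hs : Spaced n h s) (hj : j < h.length) (hpos : 0 < s j)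
    (hprev : ∀ i, i + 1 = j → s i + h.getD i 0 + 1 < s j) :
    Spaced n h (Function.update s j (s j - 1)) := by
  refine ⟨hs.size_pos, fun i hi => ?_, fun i hi => ?_⟩
  · have := hs.end_le i hi
    rcases eq_or_ne i j with rfl | hij
    · rw [Function.update_self]; omega
    · rw [Function.update_of_ne hij]; exact this
  · have := hs.end_lt_start i hi
    rcases eq_or_ne i j with rfl | hij
    · rw [Function.update_self, Function.update_of_ne (by omega)]; omega
    · rw [Function.update_of_ne hij]
      rcases eq_or_ne (i + 1) j with hij' | hij'
      · have := hprev i hij'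
        subst hij'
        rw [Function.update_self]; omega
      · rwa [Function.update_of_ne hij']

lemma adjCS_of_slide {s' : ℕ → ℕ} (hs : Spaced n h s) (hs' : Spaced n h s')
    (hj : j < h.length) (hs'j : s' j + 1 = s j) (hother : ∀ i, i ≠ j → s' i = s i) :
    adjCS (pathGraph n) (blocks n h s) (blocks n h s') := by
  have hjS : j ∈ range h.length := mem_range.2 hj
  have hsame : ∀ i ∈ range h.length, i ≠ j →
      block n (s i) (h.getD i 0) = block n (s' i) (h.getD i 0) := fun i _ hij => by
    rw [hother i hij]
  have hmoved : block n (s' j) (h.getD j 0) ≠ block n (s j) (h.getD j 0) := fun heq => by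
    have := start_eq_of_block_eq (hs'.size_pos j hj) (hs'.end_le j hj) (hs.size_pos j hj)
      (hs.end_le j hj) heq
    omega
  have hdiff := image_sdiff_image hjS hsame hs.injOn_block hmoved
  have hdiff' := image_sdiff_image hjS (fun i hi hij => (hsame i hi hij).symm) hs'.injOn_block
    hmoved.symm
  rw [← hs.comps_eq, ← hs'.comps_eq] at hdiff hdiff'
  refine ⟨⟨hs.ccMultiset_eq.trans hs'.ccMultiset_eq.symm, by simp [hdiff], by simp [hdiff']⟩,
    ?_⟩
  rw [hdiff, hdiff']
  rintro C hC C' hC'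
  rw [mem_singleton] at hC hC'
  subst hC hC'
  have hunion : block n (s j) (h.getD j 0) ∪ block n (s' j) (h.getD j 0) =
      block n (s' j) (h.getD j 0 + 1) := by
    have := hs.size_pos j hj
    ext v
    simp only [mem_union, mem_block]
    omega
  rw [hunion]
  exact isConnSub_block (Nat.succ_pos _) (by have := hs.end_le j hj; omega)

theorem reconf_packed (hs : Spaced n h s) :
    Reconf (pathGraph n) h (adjCS (pathGraph n)) (blocks n h s) (blocks n h (packedStart h)) := by
  obtain ⟨N, hN⟩ : ∃ N, ∑ j ∈ range h.length, s j = N := ⟨_, rfl⟩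
  induction N using Nat.strong_induction_on generalizing s with
  | _ N ih =>
  by_cases hpacked : ∃ j < h.length, s j ≠ packedStart h j
  swap
  · rw [blocks_congr fun j hj => not_not.1 fun hne => hpacked ⟨j, hj, hne⟩]
    exact reconf_refl hs.packed.ccMultiset_eq
  obtain ⟨hj, hne⟩ := Nat.find_spec hpacked
  set j := Nat.find hpacked
  have hprev : ∀ i, i + 1 = j → s i + h.getD i 0 + 1 < s j := by
    intro i hij
    have hi : s i = packedStart h i := by
      by_contra hi
      exact Nat.find_min hpacked (show i < j by omega) ⟨by omega, hi⟩
    have := packedStart_succ (h := h) (j := i) (by omega)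
    rw [hij] at this
    have := hs.packedStart_le hj
    omega
  have hpos : 0 < s j := by have := hs.packedStart_le hj; omega
  have hs' := hs.slide hj hpos hprev
  refine reconf_cons (hs.adjCS_of_slide hs' hj ?_ fun i hi => Function.update_of_ne hi _ _)
    hs.ccMultiset_eq (ih _ ?_ hs' rfl)
  · rw [Function.update_self]; omega
  · rw [← hN]
    exact sum_update_pred_lt (mem_range.2 hj) hpos

end Spaced

end PathSliding

theorem stmt4_general (n : ℕ) (A : Finset (Fin n)) :
    hseq n (leftmost n (hseq n A)) = hseq n A ∧
    Reconf (SimpleGraph.pathGraph n) (ccMultiset (SimpleGraph.pathGraph n) A)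
      (adjCS (SimpleGraph.pathGraph n)) A (leftmost n (hseq n A)) := by
  obtain ⟨h, s, hs, rfl⟩ := PathSliding.exists_spaced_blocks_eq A
  rw [hs.hseq_eq, hs.ccMultiset_eq, PathSliding.leftmost_eq_blocks]
  exact ⟨hs.packed.hseq_eq, hs.reconf_packed⟩

/-- On a path graph, any subset `A` with `k` connected components is
reconfigurable under CS to the left-most subset `L` with `h_L = h_A`. -/
theorem stmt4 (n k : ℕ) (A : Finset (Fin n))
    (hk : (comps (SimpleGraph.pathGraph n) A).card = k) :
    hseq n (leftmost n (hseq n A)) = hseq n A ∧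
    Reconf (SimpleGraph.pathGraph n) (ccMultiset (SimpleGraph.pathGraph n) A)
      (adjCS (SimpleGraph.pathGraph n)) A (leftmost n (hseq n A)) :=
  stmt4_general n A
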